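/- arXiv:0810.1267 — 4 statements merged into one kernel-verified Lean document; each statement's English description precedes it below -/
import Mathlib

section
/- Let A_1,…,A_n be independent, identically distributed nonnegative random variables with 𝔼[A_τ] = λ ≥ 0 and 𝔼[A_τ²] = m₂ < ∞, and let S be a Bernoulli random variable independent of (A_1,…,A_n) with ℙ(S = 0) = P_e. Let ε > 0, set R = λ + ε, and assume 0 ≤ P_e ≤ ε/(2(λ + ε)). Then for every q with q ≥ nR, 𝔼[(q + Σ_{τ=1}^n A_τ − nRS)²] − q² ≤ −(nε)·q + B′, where B′ = n·m₂ + n(n−1)λ² + n²R²(1 − P_e) − 2n²λR(1 − P_e). -/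
/-!
With `S² = S`, expanding the square leaves the moments `𝔼[(∑ A)²] = n m₂ + n(n−1)λ²`,
`𝔼[S] = 1 − P_e` and, by independence, `𝔼[(∑ A) S] = nλ(1 − P_e)`. Everything cancels against
`B'` except the linear term `2nq(λ − R(1 − P_e)) = nq(2RP_e − 2ε)`, and `RP_e ≤ ε/2`, `q ≥ 0`
bound it by `−nεq`.
-/

open MeasureTheory ProbabilityTheory Finset

section Moments

variable {Ω : Type*} [MeasurableSpace Ω] {μ : Measure Ω}

lemma integrable_of_zero_or_one [IsFiniteMeasure μ] {S : Ω → ℝ} (hS : Measurable S)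
    (hS01 : ∀ ω, S ω = 0 ∨ S ω = 1) : Integrable S μ :=
  .of_bound hS.aestronglyMeasurable 1 <| .of_forall fun ω => by
    rcases hS01 ω with h | h <;> simp [h]

lemma integral_eq_one_sub_of_zero_or_one [IsProbabilityMeasure μ] {S : Ω → ℝ} {p : ℝ}
    (hS : Measurable S) (hS01 : ∀ ω, S ω = 0 ∨ S ω = 1) (hp : 0 ≤ p)
    (hS0 : μ {ω | S ω = 0} = ENNReal.ofReal p) :
    ∫ ω, S ω ∂μ = 1 - p := by
  have h_compl : (fun ω => 1 - S ω) = {ω | S ω = 0}.indicator 1 := by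
    funext ω
    rcases hS01 ω with h | h <;> simp [h]
  have h_fail : ∫ ω, 1 - S ω ∂μ = p := by
    have hmeas : MeasurableSet {ω | S ω = 0} := hS (measurableSet_singleton 0)
    rw [h_compl, integral_indicator_one hmeas, measureReal_def, hS0, ENNReal.toReal_ofReal hp]
  rw [integral_sub (integrable_const 1) (integrable_of_zero_or_one hS hS01)] at h_fail
  simp at h_fail
  linarith

lemma integral_sq_add_sub_mul_of_idempotent [IsProbabilityMeasure μ] {X S : Ω → ℝ} (q c : ℝ)
    (hS : ∀ ω, S ω ^ 2 = S ω)
    (hX : Integrable X μ) (hX2 : Integrable (fun ω => X ω ^ 2) μ) (hSi : Integrable S μ)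
    (hXS : Integrable (fun ω => X ω * S ω) μ) :
    ∫ ω, (q + X ω - c * S ω) ^ 2 ∂μ =
      q ^ 2 + ∫ ω, X ω ^ 2 ∂μ + c ^ 2 * ∫ ω, S ω ∂μ + 2 * q * ∫ ω, X ω ∂μ
        - 2 * q * c * ∫ ω, S ω ∂μ - 2 * c * ∫ ω, X ω * S ω ∂μ := by
  have hexpand (ω : Ω) : (q + X ω - c * S ω) ^ 2 = q ^ 2 + X ω ^ 2 + c ^ 2 * S ω + 2 * q * X ω
      - 2 * q * c * S ω - 2 * c * (X ω * S ω) := by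
    linear_combination c ^ 2 * hS ω
  simp_rw [hexpand]
  rw [integral_sub (by fun_prop) (by fun_prop), integral_sub (by fun_prop) (by fun_prop),
    integral_add (by fun_prop) (by fun_prop), integral_add (by fun_prop) (by fun_prop),
    integral_add (by fun_prop) (by fun_prop)]
  simp [integral_const_mul]

variable {ι : Type*} {X : ι → Ω → ℝ} {lam m2 : ℝ}

lemma integrable_mul_of_pairwise_indepFun (hindep : Pairwise fun i j => IndepFun (X i) (X j) μ)
    (hint : ∀ i, Integrable (X i) μ) (hsq_int : ∀ i, Integrable (fun ω => X i ω ^ 2) μ)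
    (i j : ι) :
    Integrable (fun ω => X i ω * X j ω) μ := by
  obtain rfl | hij := eq_or_ne i j
  · simpa [sq] using hsq_int i
  · exact (hindep hij).integrable_mul (hint i) (hint j)

lemma integral_mul_of_pairwise_indepFun [DecidableEq ι]
    (hindep : Pairwise fun i j => IndepFun (X i) (X j) μ)
    (hint : ∀ i, Integrable (X i) μ) (hmean : ∀ i, ∫ ω, X i ω ∂μ = lam)
    (hsq : ∀ i, ∫ ω, X i ω ^ 2 ∂μ = m2) (i j : ι) :
    ∫ ω, X i ω * X j ω ∂μ = if i = j then m2 else lam ^ 2 := by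
  obtain rfl | hij := eq_or_ne i j
  · simpa [sq] using hsq i
  · rw [if_neg hij]
    exact ((hindep hij).integral_mul_eq_mul_integral (hint i).aestronglyMeasurable
      (hint j).aestronglyMeasurable).trans (by rw [hmean, hmean, sq])

variable [Fintype ι]

lemma integral_sq_sum_of_pairwise_indepFun (hindep : Pairwise fun i j => IndepFun (X i) (X j) μ)
    (hint : ∀ i, Integrable (X i) μ) (hsq_int : ∀ i, Integrable (fun ω => X i ω ^ 2) μ)
    (hmean : ∀ i, ∫ ω, X i ω ∂μ = lam) (hsq : ∀ i, ∫ ω, X i ω ^ 2 ∂μ = m2) :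
    Integrable (fun ω => (∑ i, X i ω) ^ 2) μ ∧
      ∫ ω, (∑ i, X i ω) ^ 2 ∂μ =
        Fintype.card ι * m2 + Fintype.card ι * (Fintype.card ι - 1) * lam ^ 2 := by
  classical
  have hmul := integrable_mul_of_pairwise_indepFun hindep hint hsq_int
  have hrow (i : ι) :
      ∑ j, (if i = j then m2 else lam ^ 2) = m2 + (Fintype.card ι - 1) * lam ^ 2 := by
    rw [sum_ite, filter_eq, filter_ne]
    simp [card_erase_of_mem, Nat.cast_sub (Fintype.card_pos_iff.mpr ⟨i⟩)]
  simp_rw [sq (∑ i, X i _), sum_mul_sum]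
  refine ⟨integrable_finsetSum _ fun i _ => integrable_finsetSum _ fun j _ => hmul i j, ?_⟩
  rw [integral_finsetSum _ fun i _ => integrable_finsetSum _ fun j _ => hmul i j]
  simp_rw [integral_finsetSum _ fun j _ => hmul _ j,
    integral_mul_of_pairwise_indepFun hindep hint hmean hsq, hrow]
  simp
  ring

lemma integral_sum_mul_of_indepFun {S : Ω → ℝ} (hindep : ∀ i, IndepFun (X i) S μ)
    (hint : ∀ i, Integrable (X i) μ) (hS : Integrable S μ)
    (hmean : ∀ i, ∫ ω, X i ω ∂μ = lam) :
    Integrable (fun ω => (∑ i, X i ω) * S ω) μ ∧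
      ∫ ω, (∑ i, X i ω) * S ω ∂μ = Fintype.card ι * lam * ∫ ω, S ω ∂μ := by
  have hmul i : Integrable (fun ω => X i ω * S ω) μ := (hindep i).integrable_mul (hint i) hS
  simp_rw [sum_mul]
  refine ⟨integrable_finsetSum _ fun i _ => hmul i, ?_⟩
  rw [integral_finsetSum _ fun i _ => hmul i]
  simp_rw [← Pi.mul_apply, fun i => (hindep i).integral_mul_eq_mul_integral
    (hint i).aestronglyMeasurable hS.aestronglyMeasurable]
  simp [hmean]
  ring

end Moments

theorem block_drift_long_queue_general
    {Ω : Type*} [MeasureSpace Ω] [IsProbabilityMeasure (ℙ : Measure Ω)]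
    (n : ℕ) (A : Fin n → Ω → ℝ) (S : Ω → ℝ) (lam m2 Pe eps R : ℝ)
    (hS_meas : Measurable S)
    (h_indep : iIndepFun
      (fun o : Option (Fin n) => o.elim S A) ℙ)
    (hA_int : ∀ τ, Integrable (A τ) ℙ)
    (hA_mean : ∀ τ, ∫ ω, A τ ω = lam)
    (hA_sq_int : ∀ τ, Integrable (fun ω => (A τ ω) ^ 2) ℙ)
    (hA_sq : ∀ τ, ∫ ω, (A τ ω) ^ 2 = m2)
    (hS_val : ∀ ω, S ω = 0 ∨ S ω = 1)
    (hS_zero : ℙ {ω | S ω = 0} = ENNReal.ofReal Pe)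
    (hlam : 0 ≤ lam) (heps : 0 < eps) (hR : R = lam + eps)
    (hPe0 : 0 ≤ Pe) (hPe : Pe ≤ eps / (2 * (lam + eps)))
    (q : ℝ) (hq : (n : ℝ) * R ≤ q) :
    (∫ ω, (q + ∑ τ, A τ ω - (n : ℝ) * R * S ω) ^ 2) - q ^ 2 ≤
      -((n : ℝ) * eps) * q +
        ((n : ℝ) * m2 + (n : ℝ) * ((n : ℝ) - 1) * lam ^ 2
          + (n : ℝ) ^ 2 * R ^ 2 * (1 - Pe)
          - 2 * (n : ℝ) ^ 2 * lam * R * (1 - Pe)) := by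
  have hAA : Pairwise fun τ τ' => IndepFun (A τ) (A τ') ℙ := fun τ τ' h =>
    h_indep.indepFun (i := some τ) (j := some τ') (by simpa using h)
  have hAS (τ : Fin n) : IndepFun (A τ) S ℙ :=
    h_indep.indepFun (i := some τ) (j := none) (by simp)
  have hS_int : Integrable S ℙ := integrable_of_zero_or_one hS_meas hS_val
  have hS_idem (ω : Ω) : S ω ^ 2 = S ω := by rcases hS_val ω with h | h <;> simp [h]
  have hX_int : Integrable (fun ω => ∑ τ, A τ ω) ℙ := integrable_finsetSum _ fun τ _ => hA_int τ
  have hEX : ∫ ω, ∑ τ, A τ ω = n * lam := by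
    simp [integral_finsetSum _ fun τ _ => hA_int τ, hA_mean]
  have hES := integral_eq_one_sub_of_zero_or_one hS_meas hS_val hPe0 hS_zero
  obtain ⟨hX2_int, hEX2⟩ :=
    integral_sq_sum_of_pairwise_indepFun hAA hA_int hA_sq_int hA_mean hA_sq
  obtain ⟨hXS_int, hEXS⟩ := integral_sum_mul_of_indepFun hAS hA_int hS_int hA_mean
  rw [integral_sq_add_sub_mul_of_idempotent q _ hS_idem hX_int hX2_int hS_int hXS_int,
    hEX2, hEXS, hEX, hES, Fintype.card_fin]
  subst hR
  have hRPe : 2 * (lam + eps) * Pe ≤ eps := by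
    linarith [(le_div_iff₀ (by positivity)).mp hPe]
  have hnq : 0 ≤ n * q :=
    mul_nonneg n.cast_nonneg ((by positivity : (0 : ℝ) ≤ n * (lam + eps)).trans hq)
  linear_combination mul_nonneg hnq (sub_nonneg.mpr hRPe)

/-- Lyapunov drift bound for `V(q) = q²` over one `n`-slot block when the queue is long enough
to transmit (`q ≥ n R`, with `R = lam + eps`): with i.i.d. nonnegative arrivals of mean `lam`
and second moment `m2`, and an independent Bernoulli success indicator `S` with failure
probability `Pe ≤ eps / (2 (lam + eps))`,
`𝔼[(q + ∑ τ, A τ − n R S)²] − q² ≤ −(n eps) q + B'`, where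
`B' = n m2 + n(n−1) lam² + n² R² (1−Pe) − 2 n² lam R (1−Pe)`. -/
theorem block_drift_long_queue
    {Ω : Type*} [MeasureSpace Ω] [IsProbabilityMeasure (ℙ : Measure Ω)]
    (n : ℕ) (A : Fin n → Ω → ℝ) (S : Ω → ℝ) (lam m2 Pe eps R : ℝ)
    (hA_meas : ∀ τ, Measurable (A τ)) (hS_meas : Measurable S)
    (hA_nonneg : ∀ τ ω, 0 ≤ A τ ω)
    (h_indep : iIndepFun
      (fun o : Option (Fin n) => o.elim S A) ℙ)
    (h_ident : ∀ τ τ' : Fin n, IdentDistrib (A τ) (A τ') ℙ ℙ)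
    (hA_int : ∀ τ, Integrable (A τ) ℙ)
    (hA_mean : ∀ τ, ∫ ω, A τ ω = lam)
    (hA_sq_int : ∀ τ, Integrable (fun ω => (A τ ω) ^ 2) ℙ)
    (hA_sq : ∀ τ, ∫ ω, (A τ ω) ^ 2 = m2)
    (hS_val : ∀ ω, S ω = 0 ∨ S ω = 1)
    (hS_zero : ℙ {ω | S ω = 0} = ENNReal.ofReal Pe)
    (hlam : 0 ≤ lam) (heps : 0 < eps) (hR : R = lam + eps)
    (hPe0 : 0 ≤ Pe) (hPe : Pe ≤ eps / (2 * (lam + eps)))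
    (q : ℝ) (hq : (n : ℝ) * R ≤ q) :
    (∫ ω, (q + ∑ τ, A τ ω - (n : ℝ) * R * S ω) ^ 2) - q ^ 2 ≤
      -((n : ℝ) * eps) * q +
        ((n : ℝ) * m2 + (n : ℝ) * ((n : ℝ) - 1) * lam ^ 2
          + (n : ℝ) ^ 2 * R ^ 2 * (1 - Pe)
          - 2 * (n : ℝ) ^ 2 * lam * R * (1 - Pe)) :=
  block_drift_long_queue_general n A S lam m2 Pe eps R hS_meas h_indep hA_int hA_mean hA_sq_int
    hA_sq hS_val hS_zero hlam heps hR hPe0 hPe q hq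
end

section
/- Let A_1,…,A_n be independent, identically distributed nonnegative random variables with 𝔼[A_τ] = λ ≥ 0 and 𝔼[A_τ²] = m₂ < ∞, and let S be a Bernoulli random variable independent of (A_1,…,A_n) with ℙ(S = 0) = P_e, where 0 ≤ P_e ≤ ε/(2(λ + ε)) for some ε > 0. Set R = λ + ε and define the updated queue length Q′ = q + Σ_{τ=1}^n A_τ if q < nR, and Q′ = q − nRS + Σ_{τ=1}^n A_τ if q ≥ nR. Then for every q ≥ 0, 𝔼[Q′²] − q² ≤ −(nε)·q + B, where B = max{B′, B″} with B′ = n·m₂ + n(n−1)λ² + n²R²(1 − P_e) − 2n²λR(1 − P_e) and B″ = n²R(2λ + ε) + n·m₂ + n(n−1)λ². -/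
/-!
Write `T = ∑ τ, A τ` for the arrivals of the block; by pairwise independence
`Var T = n (m₂ - λ²)` and `𝔼 T = nλ`. Below the threshold `Q' = q + T`, so
`𝔼[Q'²] - q² = 2qnλ + 𝔼[T²]`, and `q < nR` bounds `2qnλ` by `-nεq + n²R(2λ + ε)`.
Above it `Q' = q + (T - nRS)` with `S` independent of `T`, so the cross term is
`2q(nλ - nR(1 - Pe))`, and `Pe ≤ ε / (2R)` is exactly what makes it at most `-nεq`.
-/

open MeasureTheory ProbabilityTheory

namespace ProbabilityTheory

variable {Ω : Type*} [MeasurableSpace Ω] {μ : Measure Ω}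

lemma IndepFun.variance_sub_const_mul {X Y : Ω → ℝ} (hX : MemLp X 2 μ) (hY : MemLp Y 2 μ)
    (hXY : X ⟂ᵢ[μ] Y) (c : ℝ) :
    Var[fun ω ↦ X ω - c * Y ω; μ] = Var[X; μ] + c ^ 2 * Var[Y; μ] := by
  have hcY : X ⟂ᵢ[μ] fun ω ↦ -c * Y ω := hXY.comp measurable_id (measurable_const_mul (-c))
  simp_rw [sub_eq_add_neg, neg_mul_eq_neg_mul]
  rw [hcY.variance_fun_add hX (hY.const_mul (-c)), variance_const_mul, neg_sq]

lemma iIndepFun.indepFun_sum_option_elim {ι : Type*} [Fintype ι] {X : Ω → ℝ} {Y : ι → Ω → ℝ}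
    (h : iIndepFun (fun o : Option ι ↦ o.elim X Y) μ) (hX : AEMeasurable X μ)
    (hY : ∀ i, AEMeasurable (Y i) μ) : (fun ω ↦ ∑ i, Y i ω) ⟂ᵢ[μ] X := by
  have := h.indepFun_finsetSum_of_notMem₀ (s := Finset.univ.map .some) (i := none)
    (by rintro (_ | i); exacts [hX, hY i]) (by simp)
  simpa [Finset.sum_fn] using this

variable [IsProbabilityMeasure μ]

lemma integral_const_add_sq {Y : Ω → ℝ} (hY : MemLp Y 2 μ) (a : ℝ) :
    ∫ ω, (a + Y ω) ^ 2 ∂μ = Var[Y; μ] + (a + ∫ ω, Y ω ∂μ) ^ 2 := by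
  have h := variance_eq_sub (X := fun ω ↦ a + Y ω) ((memLp_const a).add hY)
  rw [variance_const_add hY.1, integral_add (integrable_const a) (hY.integrable one_le_two),
    integral_const] at h
  simp only [Pi.pow_apply, probReal_univ, one_smul] at h
  linarith

lemma IndepFun.integral_const_add_sub_const_mul_sq {X Y : Ω → ℝ} (hX : MemLp X 2 μ)
    (hY : MemLp Y 2 μ) (hXY : X ⟂ᵢ[μ] Y) (a c : ℝ) :
    ∫ ω, (a + (X ω - c * Y ω)) ^ 2 ∂μ =
      Var[X; μ] + c ^ 2 * Var[Y; μ] + (a + (∫ ω, X ω ∂μ - c * ∫ ω, Y ω ∂μ)) ^ 2 := by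
  rw [integral_const_add_sq (Y := fun ω ↦ X ω - c * Y ω) (hX.sub (hY.const_mul c)),
    hXY.variance_sub_const_mul hX hY,
    integral_sub (hX.integrable one_le_two) ((hY.integrable one_le_two).const_mul c),
    integral_const_mul]

lemma variance_fun_sum_eq_card_mul {ι : Type*} [Fintype ι] {X : ι → Ω → ℝ} {m m₂ : ℝ}
    (hX : ∀ i, MemLp (X i) 2 μ) (hindep : Pairwise fun i j ↦ X i ⟂ᵢ[μ] X j)
    (hmean : ∀ i, ∫ ω, X i ω ∂μ = m) (hsq : ∀ i, ∫ ω, X i ω ^ 2 ∂μ = m₂) :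
    Var[fun ω ↦ ∑ i, X i ω; μ] = Fintype.card ι * (m₂ - m ^ 2) := by
  have hvar : ∀ i, Var[X i; μ] = m₂ - m ^ 2 := fun i ↦ by
    rw [variance_eq_sub (hX i)]
    simp [hmean, hsq]
  have := IndepFun.variance_sum (s := Finset.univ) (fun i _ ↦ hX i) fun i _ j _ hij ↦ hindep hij
  simp_rw [Finset.sum_fn] at this
  simp [this, hvar, mul_sub]

section ZeroOne

variable {S : Ω → ℝ}

lemma memLp_of_zero_or_one (hSm : AEStronglyMeasurable S μ) (hS : ∀ ω, S ω = 0 ∨ S ω = 1)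
    (p : ENNReal) : MemLp S p μ :=
  MemLp.of_bound hSm 1 <| .of_forall fun ω ↦ by rcases hS ω with h | h <;> simp [h]

lemma integral_eq_one_sub_measureReal_zero (hSm : Measurable S) (hS : ∀ ω, S ω = 0 ∨ S ω = 1) :
    ∫ ω, S ω ∂μ = 1 - μ.real {ω | S ω = 0} := by
  have hS0 : MeasurableSet {ω | S ω = 0} := hSm (measurableSet_singleton 0)
  have hS_ind : S = {ω | S ω = 0}ᶜ.indicator 1 := by
    funext ω
    rcases hS ω with h | h <;> simp [h]
  calc ∫ ω, S ω ∂μ = ∫ ω, {ω | S ω = 0}ᶜ.indicator 1 ω ∂μ := by rw [← hS_ind]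
    _ = 1 - μ.real {ω | S ω = 0} := by
      rw [integral_indicator_one hS0.compl, probReal_compl_eq_one_sub hS0]

lemma variance_of_zero_or_one (hSm : AEStronglyMeasurable S μ) (hS : ∀ ω, S ω = 0 ∨ S ω = 1) :
    Var[S; μ] = (∫ ω, S ω ∂μ) * (1 - ∫ ω, S ω ∂μ) := by
  have hsq : S ^ 2 = S := funext fun ω ↦ by rcases hS ω with h | h <;> simp [h]
  rw [variance_eq_sub (memLp_of_zero_or_one hSm hS 2), hsq]
  ring

end ZeroOne

end ProbabilityTheory

theorem block_drift_combined_general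
    {Ω : Type*} [MeasureSpace Ω] [IsProbabilityMeasure (ℙ : Measure Ω)]
    (n : ℕ) (A : Fin n → Ω → ℝ) (S : Ω → ℝ) (lam m2 Pe eps R : ℝ)
    (hS_meas : Measurable S)
    (h_indep : iIndepFun
      (fun o : Option (Fin n) => o.elim S A) ℙ)
    (hA_int : ∀ τ, Integrable (A τ) ℙ)
    (hA_mean : ∀ τ, ∫ ω, A τ ω = lam)
    (hA_sq_int : ∀ τ, Integrable (fun ω => (A τ ω) ^ 2) ℙ)
    (hA_sq : ∀ τ, ∫ ω, (A τ ω) ^ 2 = m2)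
    (hS_val : ∀ ω, S ω = 0 ∨ S ω = 1)
    (hS_zero : ℙ {ω | S ω = 0} = ENNReal.ofReal Pe)
    (hlam : 0 ≤ lam) (heps : 0 < eps) (hR : R = lam + eps)
    (hPe0 : 0 ≤ Pe) (hPe : Pe ≤ eps / (2 * (lam + eps)))
    (q : ℝ) (hq0 : 0 ≤ q)
    (Q' : Ω → ℝ)
    (hQ' : ∀ ω, Q' ω = if q < (n : ℝ) * R then q + ∑ τ, A τ ω
      else q - (n : ℝ) * R * S ω + ∑ τ, A τ ω) :
    (∫ ω, (Q' ω) ^ 2) - q ^ 2 ≤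
      -((n : ℝ) * eps) * q +
        max ((n : ℝ) * m2 + (n : ℝ) * ((n : ℝ) - 1) * lam ^ 2
              + (n : ℝ) ^ 2 * R ^ 2 * (1 - Pe)
              - 2 * (n : ℝ) ^ 2 * lam * R * (1 - Pe))
            ((n : ℝ) ^ 2 * R * (2 * lam + eps)
              + (n : ℝ) * m2 + (n : ℝ) * ((n : ℝ) - 1) * lam ^ 2) := by
  set T : Ω → ℝ := fun ω ↦ ∑ τ, A τ ω
  have hA_L2 τ : MemLp (A τ) 2 ℙ := (memLp_two_iff_integrable_sq (hA_int τ).1).2 (hA_sq_int τ)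
  have hT_L2 : MemLp T 2 ℙ := memLp_finsetSum _ fun τ _ ↦ hA_L2 τ
  have hT_mean : ∫ ω, T ω = n * lam := by
    simp [T, integral_finsetSum _ fun τ _ ↦ hA_int τ, hA_mean]
  have hT_var : Var[T; ℙ] = n * (m2 - lam ^ 2) := by
    simpa using variance_fun_sum_eq_card_mul hA_L2
      (fun τ τ' h ↦ h_indep.indepFun (Option.some_injective _ |>.ne h)) hA_mean hA_sq
  by_cases hlt : q < n * R
  · have hQ'_sq : ∫ ω, Q' ω ^ 2 = Var[T; ℙ] + (q + ∫ ω, T ω) ^ 2 := by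
      simp_rw [hQ', if_pos hlt]
      exact integral_const_add_sq hT_L2 q
    have hgap : 0 ≤ n * (n * R - q) * (2 * lam + eps) :=
      mul_nonneg (mul_nonneg n.cast_nonneg (sub_nonneg.2 hlt.le)) (by positivity)
    rw [hQ'_sq, hT_var, hT_mean]
    refine le_trans ?_ (add_le_add_right (le_max_right _ _) _)
    linear_combination hgap
  · have hS_mean : ∫ ω, S ω = 1 - Pe := by
      rw [integral_eq_one_sub_measureReal_zero hS_meas hS_val, measureReal_def, hS_zero,
        ENNReal.toReal_ofReal hPe0]
    have hS_var : Var[S; ℙ] = (1 - Pe) * Pe := by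
      rw [variance_of_zero_or_one hS_meas.aestronglyMeasurable hS_val, hS_mean]
      ring
    have hTS : T ⟂ᵢ[ℙ] S :=
      h_indep.indepFun_sum_option_elim hS_meas.aemeasurable fun τ ↦ (hA_int τ).1.aemeasurable
    have hQ'_sq : ∫ ω, Q' ω ^ 2 = Var[T; ℙ] + (n * R) ^ 2 * Var[S; ℙ]
        + (q + ((∫ ω, T ω) - n * R * ∫ ω, S ω)) ^ 2 := by
      have hQ'_eq ω : Q' ω = q + (T ω - n * R * S ω) := by
        rw [hQ', if_neg hlt]
        ring
      simp_rw [hQ'_eq]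
      exact hTS.integral_const_add_sub_const_mul_sq hT_L2
        (memLp_of_zero_or_one hS_meas.aestronglyMeasurable hS_val 2) q _
    have hR_Pe : 2 * lam + eps ≤ 2 * R * (1 - Pe) := by
      have := (le_div_iff₀ (by positivity)).1 hPe
      rw [hR]
      linarith
    have hgap : 0 ≤ q * n * (2 * R * (1 - Pe) - (2 * lam + eps)) :=
      mul_nonneg (mul_nonneg hq0 n.cast_nonneg) (sub_nonneg.2 hR_Pe)
    rw [hQ'_sq, hT_var, hS_var, hT_mean, hS_mean]
    refine le_trans ?_ (add_le_add_right (le_max_left _ _) _)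
    linear_combination hgap

/-- Combined per-queue `n`-slot Lyapunov drift bound for the threshold scheduling scheme:
the queue updates to `Q' = q + ∑ τ, A τ` if `q < n R`, and to `Q' = q − n R S + ∑ τ, A τ`
if `q ≥ n R` (with `R = lam + eps`, i.i.d. nonnegative arrivals of mean `lam` and second
moment `m2`, and independent Bernoulli success indicator `S` with failure probability
`Pe ≤ eps / (2 (lam + eps))`). Then for every `q ≥ 0`,
`𝔼[Q'²] − q² ≤ −(n eps) q + max {B', B''}`. -/
theorem block_drift_combined
    {Ω : Type*} [MeasureSpace Ω] [IsProbabilityMeasure (ℙ : Measure Ω)]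
    (n : ℕ) (A : Fin n → Ω → ℝ) (S : Ω → ℝ) (lam m2 Pe eps R : ℝ)
    (hA_meas : ∀ τ, Measurable (A τ)) (hS_meas : Measurable S)
    (hA_nonneg : ∀ τ ω, 0 ≤ A τ ω)
    (h_indep : iIndepFun
      (fun o : Option (Fin n) => o.elim S A) ℙ)
    (h_ident : ∀ τ τ' : Fin n, IdentDistrib (A τ) (A τ') ℙ ℙ)
    (hA_int : ∀ τ, Integrable (A τ) ℙ)
    (hA_mean : ∀ τ, ∫ ω, A τ ω = lam)
    (hA_sq_int : ∀ τ, Integrable (fun ω => (A τ ω) ^ 2) ℙ)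
    (hA_sq : ∀ τ, ∫ ω, (A τ ω) ^ 2 = m2)
    (hS_val : ∀ ω, S ω = 0 ∨ S ω = 1)
    (hS_zero : ℙ {ω | S ω = 0} = ENNReal.ofReal Pe)
    (hlam : 0 ≤ lam) (heps : 0 < eps) (hR : R = lam + eps)
    (hPe0 : 0 ≤ Pe) (hPe : Pe ≤ eps / (2 * (lam + eps)))
    (q : ℝ) (hq0 : 0 ≤ q)
    (Q' : Ω → ℝ)
    (hQ' : ∀ ω, Q' ω = if q < (n : ℝ) * R then q + ∑ τ, A τ ω
      else q - (n : ℝ) * R * S ω + ∑ τ, A τ ω) :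
    (∫ ω, (Q' ω) ^ 2) - q ^ 2 ≤
      -((n : ℝ) * eps) * q +
        max ((n : ℝ) * m2 + (n : ℝ) * ((n : ℝ) - 1) * lam ^ 2
              + (n : ℝ) ^ 2 * R ^ 2 * (1 - Pe)
              - 2 * (n : ℝ) ^ 2 * lam * R * (1 - Pe))
            ((n : ℝ) ^ 2 * R * (2 * lam + eps)
              + (n : ℝ) * m2 + (n : ℝ) * ((n : ℝ) - 1) * lam ^ 2) :=
  block_drift_combined_general n A S lam m2 Pe eps R hS_meas h_indep hA_int hA_mean hA_sq_int hA_sq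
    hS_val hS_zero hlam heps hR hPe0 hPe q hq0 Q' hQ'
end

section
/- Consider M queues operating over blocks of n slots. For each user i, let (A_i(τ))_{τ∈ℕ} be i.i.d. nonnegative arrivals with 𝔼[A_i(τ)] = λ_i and 𝔼[A_i(τ)²] = m₂ᵢ < ∞, and let (S_i(k))_{k∈ℕ} be i.i.d. Bernoulli random variables with ℙ(S_i(k) = 0) = P_e, where all arrival and service random variables across users and times are mutually independent. Fix ε > 0, set R_i = λ_i + ε, and assume 0 ≤ P_e ≤ ε/(2(max_i λ_i + ε)). Define the queue lengths at block boundaries by deterministic initial values Q_i(0) ≥ 0 and, for k ∈ ℕ, Q_i((k+1)n) = Q_i(kn) + Σ_{τ=kn}^{(k+1)n−1} A_i(τ) if Q_i(kn) < nR_i, and Q_i((k+1)n) = Q_i(kn) − nR_i·S_i(k) + Σ_{τ=kn}^{(k+1)n−1} A_i(τ) if Q_i(kn) ≥ nR_i. Then the system is strongly stable: limsup_{K→∞} (1/K)·Σ_{k=0}^{K−1} Σ_{i=1}^M 𝔼[Q_i(kn)] ≤ B/(nε), where B = Σ_{i=1}^M max{B′_i, B″_i}, with B′_i = n·m₂ᵢ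 + n(n−1)λ_i² + n²R_i²(1−P_e) − 2n²λ_iR_i(1−P_e) and B″_i = n²R_i(2λ_i + ε) + n·m₂ᵢ + n(n−1)λ_i². -/
/-!
Quadratic Lyapunov drift. For a decoding outcome `s ∈ {0, 1}` and arrivals `x ≥ 0`, one block of
the threshold rule with `c = n R_i` turns `q` into `q'` with
`q' ^ 2 ≤ q ^ 2 + x ^ 2 + 2 q x + s * serviceTerm c q`, where `serviceTerm c q = c (c - 2 q)` for
`q ≥ c` and `0` otherwise. Since `Q_i(kn)` only depends on the arrivals before slot `kn` and the
outcomes of the blocks before `k`, it is independent of the next block of arrivals and of `S_i(k)`;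
taking expectations replaces `s` by `p = 1 - P_e`, and `p * serviceTerm c q ≤ c d - d q` for every
`q` once `d ≤ 2 c p`. With `d = n (2 λ_i + ε)` this is exactly the assumption on `P_e`, giving
`𝔼[Q_i((k+1)n)²] ≤ 𝔼[Q_i(kn)²] + B''_i - n ε 𝔼[Q_i(kn)]`, and telescoping over `k` bounds the
time averages by `∑ B''_i / (n ε) ≤ B / (n ε)`.
-/

open MeasureTheory ProbabilityTheory Filter Finset

noncomputable def thresholdUpdate (c q x s : ℝ) : ℝ :=
  if q < c then q + x else q - c * s + x

noncomputable def serviceTerm (c : ℝ) : ℝ → ℝ :=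
  (Set.Ici c).indicator fun y => c * (c - 2 * y)

section ThresholdUpdate

variable {c q x s : ℝ}

theorem thresholdUpdate_sq_le (hc : 0 ≤ c) (hx : 0 ≤ x) (hs : s = 0 ∨ s = 1) :
    thresholdUpdate c q x s ^ 2 ≤ q ^ 2 + x ^ 2 + 2 * q * x + s * serviceTerm c q := by
  unfold thresholdUpdate serviceTerm
  split_ifs with hq
  · rw [Set.indicator_of_notMem (by simpa using hq)]
    nlinarith
  · rw [Set.indicator_of_mem (by simpa using hq)]
    rcases hs with rfl | rfl <;> nlinarith [mul_nonneg hc hx]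

theorem mul_serviceTerm_le {p d : ℝ} (y : ℝ) (hp : 0 ≤ p) (hd : 0 ≤ d) (hdc : d ≤ 2 * c * p) :
    p * serviceTerm c y ≤ c * d - d * y := by
  unfold serviceTerm
  by_cases hy : c ≤ y
  · rw [Set.indicator_of_mem (Set.mem_Ici.2 hy)]
    nlinarith [mul_le_mul_of_nonneg_left hy (sub_nonneg.2 hdc), mul_nonneg hp (sq_nonneg c)]
  · rw [Set.indicator_of_notMem (fun h => hy (Set.mem_Ici.1 h))]
    nlinarith [not_le.1 hy]

theorem thresholdUpdate_nonneg (hc : 0 ≤ c) (hq : 0 ≤ q) (hx : 0 ≤ x) (hs : s ≤ 1) :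
    0 ≤ thresholdUpdate c q x s := by
  unfold thresholdUpdate
  split_ifs with h
  · exact add_nonneg hq hx
  · nlinarith [mul_le_mul_of_nonneg_left hs hc]

theorem thresholdUpdate_le_add (hc : 0 ≤ c) (hs : 0 ≤ s) : thresholdUpdate c q x s ≤ q + x := by
  unfold thresholdUpdate
  split_ifs
  · rfl
  · nlinarith [mul_nonneg hc hs]

theorem measurable_serviceTerm (c : ℝ) : Measurable (serviceTerm c) :=
  (measurable_const.mul (measurable_const.sub (measurable_id.const_mul 2))).indicator
    measurableSet_Ici

end ThresholdUpdate

theorem limsup_average_le_of_drift {W g : ℕ → ℝ} {B κ : ℝ} (hκ : 0 < κ) (hW : ∀ k, 0 ≤ W k)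
    (hg : ∀ k, 0 ≤ g k) (hdrift : ∀ k, W (k + 1) ≤ W k + B - κ * g k) :
    limsup (fun K : ℕ => (1 / (K : ℝ)) * ∑ k ∈ range K, g k) atTop ≤ B / κ := by
  have htelescope : ∀ K : ℕ, κ * ∑ k ∈ range K, g k ≤ W 0 + K * B - W K := by
    intro K
    induction K with
    | zero => simp
    | succ K ih =>
      rw [sum_range_succ, mul_add]
      push_cast
      linarith [hdrift K]
  have hbound : ∀ K : ℕ, 1 ≤ K →
      (1 / (K : ℝ)) * ∑ k ∈ range K, g k ≤ W 0 / κ * (1 / K) + B / κ := by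
    intro K hK1
    have hK : (0 : ℝ) < K := by exact_mod_cast hK1
    rw [div_mul_eq_mul_div, one_mul, div_le_iff₀ hK]
    field_simp
    linarith [htelescope K, hW K]
  have hlim : Tendsto (fun K : ℕ => W 0 / κ * (1 / (K : ℝ)) + B / κ) atTop (nhds (B / κ)) := by
    simpa using (tendsto_one_div_atTop_nhds_zero_nat.const_mul (W 0 / κ)).add_const (B / κ)
  calc limsup (fun K : ℕ => (1 / (K : ℝ)) * ∑ k ∈ range K, g k) atTop
      ≤ limsup (fun K : ℕ => W 0 / κ * (1 / (K : ℝ)) + B / κ) atTop :=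
        limsup_le_limsup (eventually_atTop.2 ⟨1, hbound⟩)
          (isCoboundedUnder_le_of_le atTop fun K => by
            have := sum_nonneg fun k (_ : k ∈ range K) => hg k
            positivity)
          hlim.isBoundedUnder_le
    _ = B / κ := hlim.limsup_eq

theorem limsup_average_sum_le_of_drift {ι : Type*} (s : Finset ι) {W g : ι → ℕ → ℝ} {B : ι → ℝ}
    {κ : ℝ} (hκ : 0 < κ) (hW : ∀ i k, 0 ≤ W i k) (hg : ∀ i k, 0 ≤ g i k)
    (hdrift : ∀ i k, W i (k + 1) ≤ W i k + B i - κ * g i k) :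
    limsup (fun K : ℕ => (1 / (K : ℝ)) * ∑ k ∈ range K, ∑ i ∈ s, g i k) atTop
      ≤ (∑ i ∈ s, B i) / κ :=
  limsup_average_le_of_drift hκ (fun k => sum_nonneg fun i _ => hW i k)
    (fun k => sum_nonneg fun i _ => hg i k) fun k => by
      rw [mul_sum, ← sum_add_distrib, ← sum_sub_distrib]
      exact sum_le_sum fun i _ => hdrift i k

section Queue

variable {Ω : Type*} {c : ℝ} {Q X S : ℕ → Ω → ℝ}
  (hQ : ∀ k ω, Q (k + 1) ω = thresholdUpdate c (Q k ω) (X k ω) (S k ω))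
include hQ

theorem queue_nonneg (hc : 0 ≤ c) (hQ0 : ∀ ω, 0 ≤ Q 0 ω) (hX : ∀ k ω, 0 ≤ X k ω)
    (hS : ∀ k ω, S k ω ≤ 1) (k : ℕ) (ω : Ω) : 0 ≤ Q k ω := by
  induction k generalizing ω with
  | zero => exact hQ0 ω
  | succ k ih => exact hQ k ω ▸ thresholdUpdate_nonneg hc (ih ω) (hX k ω) (hS k ω)

theorem queue_le_add_sum (hc : 0 ≤ c) (hS : ∀ k ω, 0 ≤ S k ω) (k : ℕ) (ω : Ω) :
    Q k ω ≤ Q 0 ω + ∑ l ∈ range k, X l ω := by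
  induction k with
  | zero => simp
  | succ k ih =>
    rw [hQ, sum_range_succ, ← add_assoc]
    exact (thresholdUpdate_le_add hc (hS k ω)).trans (by gcongr)

theorem queue_measurable {F : ℕ → MeasurableSpace Ω} (hF : Monotone F)
    (hQ0 : Measurable[F 0] (Q 0)) (hX : ∀ k, Measurable[F (k + 1)] (X k))
    (hS : ∀ k, Measurable[F (k + 1)] (S k)) (k : ℕ) : Measurable[F k] (Q k) := by
  induction k with
  | zero => exact hQ0
  | succ k ih =>
    have hQk := ih.mono (hF k.le_succ) le_rfl
    rw [show Q (k + 1) = _ from funext (hQ k)]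
    exact Measurable.ite (measurableSet_lt hQk measurable_const) (hQk.add (hX k))
      ((hQk.sub ((hS k).const_mul c)).add (hX k))

theorem queue_memLp [MeasurableSpace Ω] {μ : Measure Ω} [IsFiniteMeasure μ] (hc : 0 ≤ c)
    (hQ0 : ∀ ω, 0 ≤ Q 0 ω) (hQ0m : MemLp (Q 0) 2 μ) (hX : ∀ k ω, 0 ≤ X k ω)
    (hXm : ∀ k, MemLp (X k) 2 μ) (hS : ∀ k ω, 0 ≤ S k ω ∧ S k ω ≤ 1) {k : ℕ}
    (hmeas : AEStronglyMeasurable (Q k) μ) : MemLp (Q k) 2 μ := by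
  refine (hQ0m.add (memLp_finsetSum' (range k) fun l _ => hXm l)).of_le hmeas
    (Eventually.of_forall fun ω => ?_)
  rw [Real.norm_eq_abs, Real.norm_eq_abs,
    abs_of_nonneg (queue_nonneg hQ hc hQ0 hX (fun k ω => (hS k ω).2) k ω)]
  exact (queue_le_add_sum hQ hc (fun k ω => (hS k ω).1) k ω).trans (by simp [le_abs_self])

end Queue

section Probability

variable {Ω : Type*} [MeasurableSpace Ω] {μ : Measure Ω} [IsProbabilityMeasure μ]

theorem integral_eq_one_sub_measureReal_of_zero_or_one {s : Ω → ℝ} (hs : Measurable s)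
    (h01 : ∀ ω, s ω = 0 ∨ s ω = 1) : ∫ ω, s ω ∂μ = 1 - μ.real {ω | s ω = 0} := by
  have hset : MeasurableSet {ω | s ω = 0} := hs (measurableSet_singleton 0)
  calc ∫ ω, s ω ∂μ = ∫ ω, (1 - {ω | s ω = 0}.indicator 1 ω) ∂μ := by
        congr 1
        funext ω
        rcases h01 ω with h | h <;> simp [Set.indicator, h]
    _ = 1 - μ.real {ω | s ω = 0} := by
        rw [integral_sub (integrable_const 1) ((integrable_const 1).indicator hset),
          integral_indicator_one hset, integral_const, probReal_univ, one_smul]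

theorem integral_sq_sum_of_pairwise_indepFun_s5 {ι : Type*} {A : ι → Ω → ℝ} {m m₂ : ℝ} (T : Finset ι)
    (hA : ∀ τ ∈ T, MemLp (A τ) 2 μ) (hind : Set.Pairwise T fun τ τ' => IndepFun (A τ) (A τ') μ)
    (hmean : ∀ τ ∈ T, ∫ ω, A τ ω ∂μ = m) (hsq : ∀ τ ∈ T, ∫ ω, A τ ω ^ 2 ∂μ = m₂) :
    ∫ ω, (∑ τ ∈ T, A τ ω) ^ 2 ∂μ = #T * m₂ + #T * (#T - 1) * m ^ 2 := by
  have hsum : MemLp (∑ τ ∈ T, A τ) 2 μ := memLp_finsetSum' T hA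
  have hvar := IndepFun.variance_sum hA hind
  rw [variance_eq_sub hsum, sum_congr rfl fun τ hτ => variance_eq_sub (hA τ hτ)] at hvar
  have hmean_sum : ∫ ω, (∑ τ ∈ T, A τ ω) ∂μ = #T * m := by
    rw [integral_finsetSum T fun τ hτ => (hA τ hτ).integrable one_le_two,
      sum_congr rfl hmean, sum_const, nsmul_eq_mul]
  simp only [Pi.pow_apply, Finset.sum_apply] at hvar
  rw [hmean_sum, sum_congr rfl fun τ hτ => by rw [hsq τ hτ, hmean τ hτ], sum_const,
    nsmul_eq_mul] at hvar
  linear_combination hvar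

theorem integrable_serviceTerm_comp {q : Ω → ℝ} (hq : Integrable q μ) (hqm : Measurable q)
    (c : ℝ) : Integrable (fun ω => serviceTerm c (q ω)) μ :=
  (((integrable_const c).sub (hq.const_mul 2)).const_mul c).mono
    ((measurable_serviceTerm c).comp hqm).aestronglyMeasurable
    (Eventually.of_forall fun _ => norm_indicator_le_norm_self _ _)

theorem integral_mul_serviceTerm_le {q s : Ω → ℝ} {c d p : ℝ} (hq : Integrable q μ)
    (hqm : Measurable q) (hs : Measurable s) (hs01 : ∀ ω, s ω = 0 ∨ s ω = 1)
    (hqs : IndepFun q s μ) (hp : ∫ ω, s ω ∂μ = p) (hd : 0 ≤ d) (hdc : d ≤ 2 * c * p) :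
    ∫ ω, s ω * serviceTerm c (q ω) ∂μ ≤ c * d - d * ∫ ω, q ω ∂μ := by
  have hp0 : 0 ≤ p := hp ▸ integral_nonneg fun ω => by rcases hs01 ω with h | h <;> simp [h]
  calc ∫ ω, s ω * serviceTerm c (q ω) ∂μ = ∫ ω, p * serviceTerm c (q ω) ∂μ := by
        rw [integral_const_mul, ← hp]
        exact (hqs.comp (measurable_serviceTerm c) measurable_id).symm
          |>.integral_fun_mul_eq_mul_integral hs.aestronglyMeasurable
            ((measurable_serviceTerm c).comp hqm).aestronglyMeasurable
    _ ≤ ∫ ω, (c * d - d * q ω) ∂μ :=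
        integral_mono ((integrable_serviceTerm_comp hq hqm c).const_mul p)
          ((integrable_const _).sub (hq.const_mul d)) fun ω => mul_serviceTerm_le (q ω) hp0 hd hdc
    _ = c * d - d * ∫ ω, q ω ∂μ := by
        rw [integral_sub (integrable_const _) (hq.const_mul d), integral_const, probReal_univ,
          one_smul, integral_const_mul]

theorem integral_sq_thresholdUpdate_le {q X s : Ω → ℝ} {a b c d p : ℝ}
    (hq : MemLp q 2 μ) (hqm : Measurable q) (hX : MemLp X 2 μ) (hs : Measurable s)
    (hX0 : ∀ ω, 0 ≤ X ω) (hs01 : ∀ ω, s ω = 0 ∨ s ω = 1)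
    (hqX : IndepFun q X μ) (hqs : IndepFun q s μ)
    (ha : ∫ ω, X ω ∂μ = a) (hb : ∫ ω, X ω ^ 2 ∂μ = b) (hp : ∫ ω, s ω ∂μ = p)
    (hc : 0 ≤ c) (hd : 0 ≤ d) (hdc : d ≤ 2 * c * p) :
    ∫ ω, thresholdUpdate c (q ω) (X ω) (s ω) ^ 2 ∂μ
      ≤ ∫ ω, q ω ^ 2 ∂μ + b + c * d - (d - 2 * a) * ∫ ω, q ω ∂μ := by
  have hq1 := hq.integrable one_le_two
  have h1 : Integrable (fun ω => q ω ^ 2 + X ω ^ 2) μ := hq.integrable_sq.add hX.integrable_sq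
  have h2 : Integrable (fun ω => 2 * q ω * X ω) μ := by
    simpa only [Pi.mul_apply, mul_assoc] using (hq.integrable_mul hX).const_mul 2
  have h12 : Integrable (fun ω => q ω ^ 2 + X ω ^ 2 + 2 * q ω * X ω) μ := h1.add h2
  have h3 : Integrable (fun ω => s ω * serviceTerm c (q ω)) μ :=
    (integrable_serviceTerm_comp hq1 hqm c).bdd_mul hs.aestronglyMeasurable (c := 1)
      (Eventually.of_forall fun ω => by rcases hs01 ω with h | h <;> simp [h])
  have hqX_int : ∫ ω, 2 * q ω * X ω ∂μ = 2 * (∫ ω, q ω ∂μ) * a := by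
    simp_rw [mul_assoc]
    rw [integral_const_mul, hqX.integral_fun_mul_eq_mul_integral hqm.aestronglyMeasurable
      hX.aestronglyMeasurable, ha]
  calc ∫ ω, thresholdUpdate c (q ω) (X ω) (s ω) ^ 2 ∂μ
      ≤ ∫ ω, (q ω ^ 2 + X ω ^ 2 + 2 * q ω * X ω + s ω * serviceTerm c (q ω)) ∂μ :=
        integral_mono_of_nonneg (Eventually.of_forall fun ω => sq_nonneg _) (h12.add h3)
          (Eventually.of_forall fun ω => thresholdUpdate_sq_le hc (hX0 ω) (hs01 ω))
    _ = ∫ ω, q ω ^ 2 ∂μ + b + 2 * (∫ ω, q ω ∂μ) * a + ∫ ω, s ω * serviceTerm c (q ω) ∂μ := by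
        rw [integral_add h12 h3, integral_add h1 h2,
          integral_add hq.integrable_sq hX.integrable_sq, hb, hqX_int]
    _ ≤ ∫ ω, q ω ^ 2 ∂μ + b + c * d - (d - 2 * a) * ∫ ω, q ω ∂μ := by
        linarith [integral_mul_serviceTerm_le hq1 hqm hs hs01 hqs hp hd hdc]

end Probability

section Independence

variable {Ω ι β : Type*} [mβ : MeasurableSpace β] {f : ι → Ω → β}

theorem measurable_iSup_comap_of_mem {T : Set ι} {j : ι} (hj : j ∈ T) :
    Measurable[⨆ j ∈ T, mβ.comap (f j)] (f j) :=
  (comap_measurable (f j)).mono (le_iSup₂ (f := fun j _ => mβ.comap (f j)) j hj) le_rfl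

theorem ProbabilityTheory.iIndepFun.indepFun_of_measurable_iSup [MeasurableSpace Ω]
    {μ : Measure Ω} {γ γ' : Type*} [MeasurableSpace γ] [MeasurableSpace γ'] (hf : iIndepFun f μ)
    (hmeas : ∀ j, Measurable (f j)) {T T' : Set ι} (hTT' : Disjoint T T') {g : Ω → γ} {h : Ω → γ'}
    (hg : Measurable[⨆ j ∈ T, mβ.comap (f j)] g) (hh : Measurable[⨆ j ∈ T', mβ.comap (f j)] h) :
    IndepFun g h μ := by
  rw [IndepFun_iff_Indep]
  exact indep_of_indep_of_le_right
    (indep_of_indep_of_le_left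
      (indep_iSup_of_disjoint (fun j => (hmeas j).comap_le) hf.iIndep hTT') hg.comap_le)
    hh.comap_le

end Independence

section Blocks

variable {Ω : Type*}

def blockArrivals (A : ℕ → Ω → ℝ) (n k : ℕ) (ω : Ω) : ℝ :=
  ∑ τ ∈ Ico (k * n) ((k + 1) * n), A τ ω

theorem blockArrivals_nonneg {A : ℕ → Ω → ℝ} {n k : ℕ} {ω : Ω} (hA : ∀ τ, 0 ≤ A τ ω) :
    0 ≤ blockArrivals A n k ω :=
  sum_nonneg fun τ _ => hA τ

theorem card_Ico_mul_succ_mul (n k : ℕ) : #(Ico (k * n) ((k + 1) * n)) = n := by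
  rw [Nat.card_Ico, Nat.succ_mul, Nat.add_sub_cancel_left]

variable [MeasurableSpace Ω] {μ : Measure Ω} {A : ℕ → Ω → ℝ} {n k : ℕ}

theorem memLp_blockArrivals (hA : ∀ τ, MemLp (A τ) 2 μ) : MemLp (blockArrivals A n k) 2 μ := by
  convert memLp_finsetSum' (Ico (k * n) ((k + 1) * n)) fun τ _ => hA τ using 1
  funext ω
  simp [blockArrivals]

theorem integral_blockArrivals {m : ℝ} (hA : ∀ τ, Integrable (A τ) μ)
    (hmean : ∀ τ, ∫ ω, A τ ω ∂μ = m) : ∫ ω, blockArrivals A n k ω ∂μ = n * m := by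
  simp only [blockArrivals]
  rw [integral_finsetSum _ fun τ _ => hA τ, sum_congr rfl fun τ _ => hmean τ,
    sum_const, card_Ico_mul_succ_mul, nsmul_eq_mul]

theorem integral_sq_blockArrivals [IsProbabilityMeasure μ] {m m₂ : ℝ}
    (hA : ∀ τ, MemLp (A τ) 2 μ) (hind : Pairwise fun τ τ' => IndepFun (A τ) (A τ') μ)
    (hmean : ∀ τ, ∫ ω, A τ ω ∂μ = m) (hsq : ∀ τ, ∫ ω, A τ ω ^ 2 ∂μ = m₂) :
    ∫ ω, blockArrivals A n k ω ^ 2 ∂μ = n * m₂ + n * (n - 1) * m ^ 2 := by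
  simp only [blockArrivals]
  rw [integral_sq_sum_of_pairwise_indepFun_s5 _ (fun τ _ => hA τ)
    (fun τ _ τ' _ h => hind h) (fun τ _ => hmean τ) (fun τ _ => hsq τ), card_Ico_mul_succ_mul]

end Blocks

section Scheme

variable {Ω U : Type*}

def arrivalsAndOutcomes (A S : U → ℕ → Ω → ℝ) : (U × ℕ) ⊕ (U × ℕ) → Ω → ℝ :=
  Sum.elim (fun p => A p.1 p.2) (fun p => S p.1 p.2)

def pastIndices (U : Type*) (n k : ℕ) : Set ((U × ℕ) ⊕ (U × ℕ)) :=
  {j | Sum.elim (fun p : U × ℕ => p.2 < k * n) (fun p => p.2 < k) j}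

theorem pastIndices_mono (U : Type*) (n : ℕ) : Monotone (pastIndices U n) := by
  rintro k k' hk (⟨i, τ⟩ | ⟨i, l⟩) hj
  · exact hj.trans_le (Nat.mul_le_mul_right n hk)
  · exact hj.trans_le hk

abbrev pastSigma (A S : U → ℕ → Ω → ℝ) (n k : ℕ) : MeasurableSpace Ω :=
  ⨆ j ∈ pastIndices U n k, MeasurableSpace.comap (arrivalsAndOutcomes A S j) inferInstance

variable {A S : U → ℕ → Ω → ℝ} {n : ℕ} {i : U} {c q₀ : ℝ} {Q : ℕ → Ω → ℝ}

theorem queue_measurable_pastSigma (hQ0 : ∀ ω, Q 0 ω = q₀)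
    (hQ : ∀ k ω, Q (k + 1) ω = thresholdUpdate c (Q k ω) (blockArrivals (A i) n k ω) (S i k ω))
    (k : ℕ) : Measurable[pastSigma A S n k] (Q k) := by
  refine queue_measurable hQ (F := pastSigma A S n)
    (fun k k' hk => biSup_mono (pastIndices_mono U n hk))
    (by rw [funext hQ0]; exact measurable_const) (fun k => ?_) (fun k => ?_) k
  · exact Finset.measurable_sum _ fun τ hτ => measurable_iSup_comap_of_mem
      (f := arrivalsAndOutcomes A S) (j := .inl (i, τ)) (mem_Ico.1 hτ).2
  · exact measurable_iSup_comap_of_mem (f := arrivalsAndOutcomes A S) (j := .inr (i, k))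
      k.lt_succ_self

variable [MeasurableSpace Ω]

theorem measurable_arrivalsAndOutcomes (hA : ∀ i τ, Measurable (A i τ))
    (hS : ∀ i k, Measurable (S i k)) : ∀ j, Measurable (arrivalsAndOutcomes A S j)
  | .inl (i, τ) => hA i τ
  | .inr (i, k) => hS i k

theorem pastSigma_le (hA : ∀ i τ, Measurable (A i τ)) (hS : ∀ i k, Measurable (S i k))
    (k : ℕ) : pastSigma A S n k ≤ ‹MeasurableSpace Ω› :=
  iSup₂_le fun j _ => (measurable_arrivalsAndOutcomes hA hS j).comap_le

variable {μ : Measure Ω} (hA : ∀ i τ, Measurable (A i τ)) (hS : ∀ i k, Measurable (S i k))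
  (hind : iIndepFun (arrivalsAndOutcomes A S) μ) (hQ0 : ∀ ω, Q 0 ω = q₀)
  (hQ : ∀ k ω, Q (k + 1) ω = thresholdUpdate c (Q k ω) (blockArrivals (A i) n k ω) (S i k ω))
include hA hS hind hQ0 hQ

theorem indepFun_queue_blockArrivals (k : ℕ) : IndepFun (Q k) (blockArrivals (A i) n k) μ :=
  hind.indepFun_of_measurable_iSup (measurable_arrivalsAndOutcomes hA hS)
    disjoint_compl_right (queue_measurable_pastSigma hQ0 hQ k)
    (Finset.measurable_sum _ fun τ hτ => measurable_iSup_comap_of_mem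
      (f := arrivalsAndOutcomes A S) (j := .inl (i, τ)) (not_lt.2 (mem_Ico.1 hτ).1))

theorem indepFun_queue_service (k : ℕ) : IndepFun (Q k) (S i k) μ :=
  hind.indepFun_of_measurable_iSup (measurable_arrivalsAndOutcomes hA hS)
    disjoint_compl_right (queue_measurable_pastSigma hQ0 hQ k)
    (measurable_iSup_comap_of_mem (f := arrivalsAndOutcomes A S) (j := .inr (i, k))
      (lt_irrefl k))

theorem integral_sq_queue_succ_le [IsProbabilityMeasure μ] {m m₂ p d : ℝ} (hq₀ : 0 ≤ q₀)
    (hc : 0 ≤ c) (hA0 : ∀ τ ω, 0 ≤ A i τ ω) (hA2 : ∀ τ, MemLp (A i τ) 2 μ)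
    (hmean : ∀ τ, ∫ ω, A i τ ω ∂μ = m) (hsq : ∀ τ, ∫ ω, A i τ ω ^ 2 ∂μ = m₂)
    (hS01 : ∀ k ω, S i k ω = 0 ∨ S i k ω = 1) (hp : ∀ k, ∫ ω, S i k ω ∂μ = p)
    (hd : 0 ≤ d) (hdc : d ≤ 2 * c * p) (k : ℕ) :
    ∫ ω, Q (k + 1) ω ^ 2 ∂μ ≤ ∫ ω, Q k ω ^ 2 ∂μ + (n * m₂ + n * (n - 1) * m ^ 2 + c * d)
      - (d - 2 * (n * m)) * ∫ ω, Q k ω ∂μ := by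
  have hQm : Measurable (Q k) :=
    (queue_measurable_pastSigma hQ0 hQ k).mono (pastSigma_le hA hS k) le_rfl
  have hQ2 : MemLp (Q k) 2 μ :=
    queue_memLp hQ hc (fun ω => hQ0 ω ▸ hq₀) (by rw [funext hQ0]; exact memLp_const q₀)
      (fun k ω => blockArrivals_nonneg (hA0 · ω)) (fun k => memLp_blockArrivals hA2)
      (fun k ω => by rcases hS01 k ω with h | h <;> simp [h]) hQm.aestronglyMeasurable
  simp_rw [hQ k]
  exact (integral_sq_thresholdUpdate_le hQ2 hQm (memLp_blockArrivals hA2) (hS i k)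
    (fun ω => blockArrivals_nonneg (hA0 · ω)) (hS01 k)
    (indepFun_queue_blockArrivals hA hS hind hQ0 hQ k)
    (indepFun_queue_service hA hS hind hQ0 hQ k)
    (integral_blockArrivals (fun τ => (hA2 τ).integrable one_le_two) hmean)
    (integral_sq_blockArrivals hA2
      (fun τ τ' h => hind.indepFun (i := .inl (i, τ)) (j := .inl (i, τ')) (by simpa using h))
      hmean hsq)
    (hp k) hc hd hdc).trans_eq (by ring)

end Scheme

theorem two_mul_add_le_two_mul_add_mul_one_sub {lam L ε P : ℝ} (hlam : 0 ≤ lam) (hL : lam ≤ L)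
    (hε : 0 < ε) (hP : P ≤ ε / (2 * (L + ε))) : 2 * lam + ε ≤ 2 * (lam + ε) * (1 - P) := by
  have hP' : P * (2 * (L + ε)) ≤ ε := (le_div_iff₀ (by linarith)).1 hP
  rcases le_total 0 P with hP0 | hP0 <;> nlinarith

theorem mac_threshold_scheme_strongly_stable_general
    {Ω : Type*} [MeasureSpace Ω] [IsProbabilityMeasure (ℙ : Measure Ω)]
    (M n : ℕ) (hM : 0 < M) (hn : 0 < n)
    (A : Fin M → ℕ → Ω → ℝ) (S : Fin M → ℕ → Ω → ℝ)
    (lam m2 R : Fin M → ℝ) (Pe eps : ℝ)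
    (hA_meas : ∀ i τ, Measurable (A i τ)) (hS_meas : ∀ i k, Measurable (S i k))
    (hA_nonneg : ∀ i τ ω, 0 ≤ A i τ ω)
    (h_indep : iIndepFun
      (Sum.elim (fun p : Fin M × ℕ => A p.1 p.2) (fun p : Fin M × ℕ => S p.1 p.2)) ℙ)
    (hA_mean : ∀ i τ, ∫ ω, A i τ ω = lam i)
    (hA_sq_int : ∀ i τ, Integrable (fun ω => (A i τ ω) ^ 2) ℙ)
    (hA_sq : ∀ i τ, ∫ ω, (A i τ ω) ^ 2 = m2 i)
    (hS_val : ∀ i k ω, S i k ω = 0 ∨ S i k ω = 1)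
    (hS_zero : ∀ i k, ℙ {ω | S i k ω = 0} = ENNReal.ofReal Pe)
    (hlam : ∀ i, 0 ≤ lam i) (heps : 0 < eps) (hR : ∀ i, R i = lam i + eps)
    (hPe0 : 0 ≤ Pe)
    (hPe : Pe ≤ eps / (2 * ((Finset.univ.sup'
      (Finset.univ_nonempty_iff.mpr (Fin.pos_iff_nonempty.mp hM)) lam) + eps)))
    (Q0 : Fin M → ℝ) (hQ0 : ∀ i, 0 ≤ Q0 i)
    (Q : Fin M → ℕ → Ω → ℝ)
    (hQ_init : ∀ i ω, Q i 0 ω = Q0 i)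
    (hQ_rec : ∀ i k ω, Q i (k + 1) ω =
      if Q i k ω < (n : ℝ) * R i then
        Q i k ω + ∑ τ ∈ Finset.Ico (k * n) ((k + 1) * n), A i τ ω
      else
        Q i k ω - (n : ℝ) * R i * S i k ω + ∑ τ ∈ Finset.Ico (k * n) ((k + 1) * n), A i τ ω) :
    Filter.limsup (fun K : ℕ =>
        (1 / (K : ℝ)) * ∑ k ∈ Finset.range K, ∑ i, ∫ ω, Q i k ω) Filter.atTop
      ≤ (∑ i, max
          ((n : ℝ) * m2 i + (n : ℝ) * ((n : ℝ) - 1) * (lam i) ^ 2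
            + (n : ℝ) ^ 2 * (R i) ^ 2 * (1 - Pe)
            - 2 * (n : ℝ) ^ 2 * lam i * R i * (1 - Pe))
          ((n : ℝ) ^ 2 * R i * (2 * lam i + eps)
            + (n : ℝ) * m2 i + (n : ℝ) * ((n : ℝ) - 1) * (lam i) ^ 2))
        / ((n : ℝ) * eps) := by
  have hQ : ∀ i k ω, Q i (k + 1) ω =
      thresholdUpdate (n * R i) (Q i k ω) (blockArrivals (A i) n k ω) (S i k ω) := hQ_rec
  have hc : ∀ i, 0 ≤ (n : ℝ) * R i := fun i =>
    mul_nonneg n.cast_nonneg (by linarith [hR i, hlam i])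
  have hS_mean : ∀ i k, ∫ ω, S i k ω = 1 - Pe := fun i k => by
    rw [integral_eq_one_sub_measureReal_of_zero_or_one (hS_meas i k) (hS_val i k),
      measureReal_def, hS_zero, ENNReal.toReal_ofReal hPe0]
  have hdrift : ∀ i k, ∫ ω, Q i (k + 1) ω ^ 2 ≤ (∫ ω, Q i k ω ^ 2)
      + ((n : ℝ) ^ 2 * R i * (2 * lam i + eps) + n * m2 i + n * (n - 1) * lam i ^ 2)
      - n * eps * ∫ ω, Q i k ω := fun i k => by
    have hPe_i :=
      two_mul_add_le_two_mul_add_mul_one_sub (hlam i) (le_sup' lam (mem_univ i)) heps hPe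
    refine (integral_sq_queue_succ_le hA_meas hS_meas h_indep (hQ_init i) (hQ i) (hQ0 i) (hc i)
      (hA_nonneg i)
      (fun τ => (memLp_two_iff_integrable_sq (hA_meas i τ).aestronglyMeasurable).2 (hA_sq_int i τ))
      (hA_mean i) (hA_sq i) (hS_val i) (hS_mean i) (d := n * (2 * lam i + eps))
      (mul_nonneg n.cast_nonneg (by linarith [hlam i])) ?_ k).trans_eq ?_
    · rw [hR i]
      nlinarith [mul_le_mul_of_nonneg_left hPe_i n.cast_nonneg]
    · rw [hR i]
      ring
  have hQ_nonneg : ∀ i k, 0 ≤ ∫ ω, Q i k ω := fun i k => integral_nonneg <|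
    queue_nonneg (hQ i) (hc i) (fun ω => hQ_init i ω ▸ hQ0 i)
      (fun k ω => blockArrivals_nonneg (hA_nonneg i · ω))
      (fun k ω => by rcases hS_val i k ω with h | h <;> simp [h]) k
  refine (limsup_average_sum_le_of_drift univ (mul_pos (Nat.cast_pos.2 hn) heps)
    (fun i k => integral_nonneg fun ω => sq_nonneg _) hQ_nonneg hdrift).trans ?_
  gcongr with i
  exact le_max_right _ _

/-- Stability (achievability) half of the capacity-region/stability-region equivalence for the
MAC, at the level of the queueing scheme. `M` queues operate over blocks of `n` slots; user `i`
has i.i.d. nonnegative arrivals `A i τ` with mean `lam i` and second moment `m2 i`, and i.i.d.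
Bernoulli decoding indicators `S i k` with failure probability `Pe`, all mutually independent.
With `R i = lam i + eps` and `Pe ≤ eps / (2 (max_i lam i + eps))`, user `i` transmits `n * R i`
units in block `k` iff its queue `Q i k` (the queue length at time `k n`) is at least `n * R i`.
Then the system is strongly stable:
`limsup_{K→∞} (1/K) ∑_{k<K} ∑ i, 𝔼[Q i k] ≤ B / (n eps)` where `B = ∑ i, max (B' i) (B'' i)`. -/
theorem mac_threshold_scheme_strongly_stable
    {Ω : Type*} [MeasureSpace Ω] [IsProbabilityMeasure (ℙ : Measure Ω)]
    (M n : ℕ) (hM : 0 < M) (hn : 0 < n)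
    (A : Fin M → ℕ → Ω → ℝ) (S : Fin M → ℕ → Ω → ℝ)
    (lam m2 R : Fin M → ℝ) (Pe eps : ℝ)
    (hA_meas : ∀ i τ, Measurable (A i τ)) (hS_meas : ∀ i k, Measurable (S i k))
    (hA_nonneg : ∀ i τ ω, 0 ≤ A i τ ω)
    (h_indep : iIndepFun
      (Sum.elim (fun p : Fin M × ℕ => A p.1 p.2) (fun p : Fin M × ℕ => S p.1 p.2)) ℙ)
    (hA_ident : ∀ i, ∀ τ τ' : ℕ, IdentDistrib (A i τ) (A i τ') ℙ ℙ)
    (hA_int : ∀ i τ, Integrable (A i τ) ℙ)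
    (hA_mean : ∀ i τ, ∫ ω, A i τ ω = lam i)
    (hA_sq_int : ∀ i τ, Integrable (fun ω => (A i τ ω) ^ 2) ℙ)
    (hA_sq : ∀ i τ, ∫ ω, (A i τ ω) ^ 2 = m2 i)
    (hS_val : ∀ i k ω, S i k ω = 0 ∨ S i k ω = 1)
    (hS_zero : ∀ i k, ℙ {ω | S i k ω = 0} = ENNReal.ofReal Pe)
    (hlam : ∀ i, 0 ≤ lam i) (heps : 0 < eps) (hR : ∀ i, R i = lam i + eps)
    (hPe0 : 0 ≤ Pe)
    (hPe : Pe ≤ eps / (2 * ((Finset.univ.sup'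
      (Finset.univ_nonempty_iff.mpr (Fin.pos_iff_nonempty.mp hM)) lam) + eps)))
    (Q0 : Fin M → ℝ) (hQ0 : ∀ i, 0 ≤ Q0 i)
    (Q : Fin M → ℕ → Ω → ℝ)
    (hQ_init : ∀ i ω, Q i 0 ω = Q0 i)
    (hQ_rec : ∀ i k ω, Q i (k + 1) ω =
      if Q i k ω < (n : ℝ) * R i then
        Q i k ω + ∑ τ ∈ Finset.Ico (k * n) ((k + 1) * n), A i τ ω
      else
        Q i k ω - (n : ℝ) * R i * S i k ω + ∑ τ ∈ Finset.Ico (k * n) ((k + 1) * n), A i τ ω) :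
    Filter.limsup (fun K : ℕ =>
        (1 / (K : ℝ)) * ∑ k ∈ Finset.range K, ∑ i, ∫ ω, Q i k ω) Filter.atTop
      ≤ (∑ i, max
          ((n : ℝ) * m2 i + (n : ℝ) * ((n : ℝ) - 1) * (lam i) ^ 2
            + (n : ℝ) ^ 2 * (R i) ^ 2 * (1 - Pe)
            - 2 * (n : ℝ) ^ 2 * lam i * R i * (1 - Pe))
          ((n : ℝ) ^ 2 * R i * (2 * lam i + eps)
            + (n : ℝ) * m2 i + (n : ℝ) * ((n : ℝ) - 1) * (lam i) ^ 2))
        / ((n : ℝ) * eps) :=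
  mac_threshold_scheme_strongly_stable_general M n hM hn A S lam m2 R Pe eps hA_meas hS_meas
    hA_nonneg h_indep hA_mean hA_sq_int hA_sq hS_val hS_zero hlam heps hR hPe0 hPe Q0 hQ0 Q hQ_init
    hQ_rec
end

section
/- Fix N₀ > 0, M ∈ ℕ, positive powers P_i, and a nonnegative weight vector w ∈ ℝ^M. Let H = (H_1,…,H_M) be a random vector of nonnegative channel gains such that 𝔼[(1/2)·log(1 + (Σ_{i∈S} H_iP_i)/N₀)] < ∞ for every S ⊆ {1,…,M}. Then the greedy policy is optimal for the linear utility u(R) = Σ_i w_iR_i: 𝔼[ max { Σ_i w_i r_i : r ∈ C_g(P,H) } ] = max { Σ_i w_iR_i : R ∈ C_a(P) }, where C_g(P,h) = { r ∈ ℝ^M_+ : Σ_{i∈S} r_i ≤ (1/2)·log(1 + (Σ_{i∈S} h_iP_i)/N₀) for all S ⊆ {1,…,M} } is the instantaneous capacity region and C_a(P) = { R ∈ ℝ^M_+ : Σ_{i∈S} R_i ≤ 𝔼[(1/2)·log(1 + (Σ_{i∈S} H_iP_i)/N₀)] for all S ⊆ {1,…,M} } is the throughput capacity region. -/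
open MeasureTheory ProbabilityTheory Finset

/-!
For a rank function `f` (normalised, monotone, submodular) and weights `w ≥ 0` listed in
decreasing order by `σ`, the maximum of `∑ i, w i * r i` over the polymatroid of `f` is attained
at the greedy vertex, which saturates the constraints on the prefixes `A₀ ⊆ A₁ ⊆ ⋯ ⊆ Aₙ` of `σ`.
By Abel summation the maximum is `∑ₖ (w_{σ k} - w_{σ (k+1)}) * f A_{k+1}`, which is linear in `f`,
and the same order `σ` serves every fading state. Both capacity regions are polymatroids (of
`S ↦ C(∑_{i ∈ S} hᵢPᵢ, N₀)` and of its expectation), so integrating the instantaneous maxima gives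
the maximum over the throughput region.
-/

namespace GreedyMAC

lemma sum_range_mul_sub_eq_sum_range_sub_mul {R : Type*} [CommRing R] (c G : ℕ → R) (m : ℕ)
    (hc : c m = 0) (hG : G 0 = 0) :
    ∑ k ∈ range m, c k * (G (k + 1) - G k) = ∑ k ∈ range m, (c k - c (k + 1)) * G (k + 1) := by
  have telescope : ∑ k ∈ range m, (c (k + 1) * G (k + 1) - c k * G k) = 0 := by
    rw [sum_range_sub (fun k => c k * G k), hc, hG, zero_mul, mul_zero, sub_zero]
  rw [← sub_eq_zero, ← sum_sub_distrib, ← telescope]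
  exact sum_congr rfl fun k _ => by ring

section SortedWeight

variable {ι : Type*} {n : ℕ}

/-- Padded with `0` beyond `n`, so that Abel summation produces no boundary term. -/
noncomputable def sortedWeight (w : ι → ℝ) (σ : Fin n ≃ ι) (k : ℕ) : ℝ :=
  if h : k < n then w (σ ⟨k, h⟩) else 0

lemma sortedWeight_sub_succ_nonneg {w : ι → ℝ} (hw : ∀ i, 0 ≤ w i) {σ : Fin n ≃ ι}
    (hσ : Antitone (w ∘ σ)) (k : ℕ) : 0 ≤ sortedWeight w σ k - sortedWeight w σ (k + 1) := by
  unfold sortedWeight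
  by_cases hk : k + 1 < n
  · rw [dif_pos (by omega), dif_pos hk, sub_nonneg]
    exact hσ (Fin.mk_le_mk.2 k.le_succ)
  · rw [dif_neg hk, sub_zero]
    split_ifs <;> simp [hw]

end SortedWeight

section Polymatroid

variable {ι : Type*} [Fintype ι] {n : ℕ}

structure IsRankFunction [DecidableEq ι] (f : Finset ι → ℝ) : Prop where
  map_empty : f ∅ = 0
  mono : Monotone f
  insert_sub_le_insert_sub : ∀ ⦃A B : Finset ι⦄ ⦃j : ι⦄, A ⊆ B → j ∉ B →
    f (insert j B) - f B ≤ f (insert j A) - f A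

def polymatroid (f : Finset ι → ℝ) : Set (ι → ℝ) :=
  {r | (∀ i, 0 ≤ r i) ∧ ∀ S : Finset ι, ∑ i ∈ S, r i ≤ f S}

def prefixSet (σ : Fin n ≃ ι) (k : ℕ) : Finset ι :=
  univ.filter fun i => (σ.symm i : ℕ) < k

lemma mem_prefixSet {σ : Fin n ≃ ι} {k : ℕ} {i : ι} :
    i ∈ prefixSet σ k ↔ (σ.symm i : ℕ) < k := by
  simp [prefixSet]

@[simp]
lemma prefixSet_zero (σ : Fin n ≃ ι) : prefixSet σ 0 = ∅ := by
  ext i; simp [mem_prefixSet]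

lemma prefixSet_of_le (σ : Fin n ≃ ι) {k : ℕ} (hk : n ≤ k) : prefixSet σ k = univ := by
  ext i; simpa [mem_prefixSet] using (σ.symm i).isLt.trans_le hk

lemma prefixSet_mono (σ : Fin n ≃ ι) : Monotone (prefixSet σ) :=
  fun _ _ hkl _ hi => mem_prefixSet.2 ((mem_prefixSet.1 hi).trans_le hkl)

lemma apply_notMem_prefixSet (σ : Fin n ≃ ι) (k : Fin n) : σ k ∉ prefixSet σ k := by
  simp [mem_prefixSet]

lemma prefixSet_succ [DecidableEq ι] (σ : Fin n ≃ ι) (k : Fin n) :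
    prefixSet σ (k + 1) = insert (σ k) (prefixSet σ k) := by
  ext i
  rw [mem_insert, mem_prefixSet, mem_prefixSet, Nat.lt_succ_iff_lt_or_eq, or_comm,
    Fin.val_eq_val, Equiv.symm_apply_eq]

/-- The Abel-summed form of `∑ k, w (σ k) * (f (prefixSet σ (k + 1)) - f (prefixSet σ k))`, the
utility of the greedy vertex; it is linear in `f`. -/
noncomputable def greedyValue (w : ι → ℝ) (σ : Fin n ≃ ι) (f : Finset ι → ℝ) : ℝ :=
  ∑ k ∈ range n, (sortedWeight w σ k - sortedWeight w σ (k + 1)) * f (prefixSet σ (k + 1))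

lemma sum_mul_eq_greedyValue (w x : ι → ℝ) (σ : Fin n ≃ ι) :
    ∑ i, w i * x i = greedyValue w σ (fun S => ∑ i ∈ S, x i) := by
  classical
  have hstep (k : Fin n) : w (σ k) * x (σ k) = sortedWeight w σ k *
      (∑ i ∈ prefixSet σ (k + 1), x i - ∑ i ∈ prefixSet σ k, x i) := by
    rw [prefixSet_succ, sum_insert (apply_notMem_prefixSet σ k), add_sub_cancel_right,
      sortedWeight, dif_pos k.isLt]
  rw [← σ.sum_comp, Fintype.sum_congr _ _ hstep,
    Fin.sum_univ_eq_sum_range (fun k => sortedWeight w σ k *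
      (∑ i ∈ prefixSet σ (k + 1), x i - ∑ i ∈ prefixSet σ k, x i)),
    sum_range_mul_sub_eq_sum_range_sub_mul (sortedWeight w σ)
      (fun k => ∑ i ∈ prefixSet σ k, x i) n (by simp [sortedWeight]) (by simp)]
  rfl

lemma sum_mul_le_greedyValue {w : ι → ℝ} (hw : ∀ i, 0 ≤ w i) {σ : Fin n ≃ ι}
    (hσ : Antitone (w ∘ σ)) {f : Finset ι → ℝ} {r : ι → ℝ} (hr : r ∈ polymatroid f) :
    ∑ i, w i * r i ≤ greedyValue w σ f := by
  rw [sum_mul_eq_greedyValue]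
  exact sum_le_sum fun k _ =>
    mul_le_mul_of_nonneg_left (hr.2 _) (sortedWeight_sub_succ_nonneg hw hσ k)

def greedyVertex (σ : Fin n ≃ ι) (f : Finset ι → ℝ) (i : ι) : ℝ :=
  f (prefixSet σ (σ.symm i + 1)) - f (prefixSet σ (σ.symm i))

lemma greedyVertex_apply (σ : Fin n ≃ ι) (f : Finset ι → ℝ) (k : Fin n) :
    greedyVertex σ f (σ k) = f (prefixSet σ (k + 1)) - f (prefixSet σ k) := by
  simp [greedyVertex]

lemma sum_prefixSet_greedyVertex {f : Finset ι → ℝ} (hf : f ∅ = 0) (σ : Fin n ≃ ι) (k : ℕ) :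
    ∑ i ∈ prefixSet σ k, greedyVertex σ f i = f (prefixSet σ k) := by
  classical
  induction k with
  | zero => simp [hf]
  | succ k ih =>
    by_cases hk : k < n
    · rw [prefixSet_succ σ ⟨k, hk⟩, sum_insert (apply_notMem_prefixSet σ _), ih,
        greedyVertex_apply, prefixSet_succ σ ⟨k, hk⟩, sub_add_cancel]
    · rwa [prefixSet_of_le σ (by omega), ← prefixSet_of_le σ (not_lt.1 hk)]

/-- Adding `σ k` to the trace of `S` gains at least the increment `f (prefixSet σ (k + 1)) -
f (prefixSet σ k)` by diminishing returns, and that increment is the greedy rate of `σ k`. -/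
lemma sum_inter_prefixSet_greedyVertex_le [DecidableEq ι] {f : Finset ι → ℝ}
    (hf : IsRankFunction f) (σ : Fin n ≃ ι) (S : Finset ι) (k : ℕ) :
    ∑ i ∈ S ∩ prefixSet σ k, greedyVertex σ f i ≤ f (S ∩ prefixSet σ k) := by
  induction k with
  | zero => simp [hf.map_empty]
  | succ k ih =>
    by_cases hk : k < n
    · obtain ⟨j, rfl⟩ : ∃ j : Fin n, (j : ℕ) = k := ⟨⟨k, hk⟩, rfl⟩
      have hj : σ j ∉ S ∩ prefixSet σ j := fun h => apply_notMem_prefixSet σ j (mem_inter.1 h).2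
      rw [prefixSet_succ σ j]
      by_cases hjS : σ j ∈ S
      · rw [inter_insert_of_mem hjS, sum_insert hj, greedyVertex_apply]
        have hdim := hf.insert_sub_le_insert_sub (inter_subset_right (s₁ := S))
          (apply_notMem_prefixSet σ j)
        rw [← prefixSet_succ σ j] at hdim
        linarith
      · rwa [inter_insert_of_notMem hjS]
    · rwa [prefixSet_of_le σ (by omega), ← prefixSet_of_le σ (not_lt.1 hk)]

lemma greedyVertex_mem_polymatroid [DecidableEq ι] {f : Finset ι → ℝ} (hf : IsRankFunction f)
    (σ : Fin n ≃ ι) : greedyVertex σ f ∈ polymatroid f := by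
  refine ⟨fun i => sub_nonneg.2 (hf.mono (prefixSet_mono σ (Nat.le_succ _))), fun S => ?_⟩
  simpa [prefixSet_of_le σ le_rfl] using sum_inter_prefixSet_greedyVertex_le hf σ S n

lemma sum_mul_greedyVertex {f : Finset ι → ℝ} (hf : f ∅ = 0) (w : ι → ℝ) (σ : Fin n ≃ ι) :
    ∑ i, w i * greedyVertex σ f i = greedyValue w σ f := by
  rw [sum_mul_eq_greedyValue w _ σ]
  simp only [greedyValue, sum_prefixSet_greedyVertex hf]

theorem isGreatest_image_polymatroid [DecidableEq ι] {w : ι → ℝ} (hw : ∀ i, 0 ≤ w i)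
    {σ : Fin n ≃ ι} (hσ : Antitone (w ∘ σ)) {f : Finset ι → ℝ} (hf : IsRankFunction f) :
    IsGreatest ((fun r : ι → ℝ => ∑ i, w i * r i) '' polymatroid f) (greedyValue w σ f) :=
  ⟨⟨_, greedyVertex_mem_polymatroid hf σ, sum_mul_greedyVertex hf.map_empty w σ⟩,
    by rintro _ ⟨r, hr, rfl⟩; exact sum_mul_le_greedyValue hw hσ hr⟩

end Polymatroid

section Expectation

variable {ι Ω : Type*} [MeasurableSpace Ω] {μ : Measure Ω} {f : Ω → Finset ι → ℝ}

lemma IsRankFunction.integral [DecidableEq ι] (hf : ∀ ω, IsRankFunction (f ω))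
    (hint : ∀ S, Integrable (fun ω => f ω S) μ) : IsRankFunction fun S => ∫ ω, f ω S ∂μ where
  map_empty := by simp [(hf _).map_empty]
  mono _ _ hAB := integral_mono (hint _) (hint _) fun ω => (hf ω).mono hAB
  insert_sub_le_insert_sub _ _ _ hAB hjB := by
    rw [← integral_sub (hint _) (hint _), ← integral_sub (hint _) (hint _)]
    exact integral_mono ((hint _).sub (hint _)) ((hint _).sub (hint _))
      fun ω => (hf ω).insert_sub_le_insert_sub hAB hjB

lemma integral_greedyValue [Fintype ι] {n : ℕ} (w : ι → ℝ) (σ : Fin n ≃ ι)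
    (hint : ∀ S, Integrable (fun ω => f ω S) μ) :
    ∫ ω, greedyValue w σ (f ω) ∂μ = greedyValue w σ fun S => ∫ ω, f ω S ∂μ := by
  unfold greedyValue
  rw [integral_finsetSum _ fun k _ => (hint _).const_mul _]
  exact sum_congr rfl fun k _ => integral_const_mul _ _

end Expectation

section Gaussian

/-- Shannon's formula `C(P, N)`. -/
noncomputable def gaussianCapacity (p N : ℝ) : ℝ := 1 / 2 * Real.log (1 + p / N)

/-- Successive decoding: the extra rate from adding power `c` to power `p` is the capacity of `c`
with `p` treated as noise. -/
lemma gaussianCapacity_add_sub {p c N : ℝ} (hN : 0 < N) (hp : 0 ≤ p) (hc : 0 ≤ c) :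
    gaussianCapacity (p + c) N - gaussianCapacity p N = gaussianCapacity c (N + p) := by
  have hfactor : 1 + (p + c) / N = (1 + p / N) * (1 + c / (N + p)) := by
    field_simp
    ring
  unfold gaussianCapacity
  rw [hfactor, Real.log_mul (by positivity) (by positivity)]
  ring

lemma gaussianCapacity_mono {p q N : ℝ} (hN : 0 < N) (hp : 0 ≤ p) (hpq : p ≤ q) :
    gaussianCapacity p N ≤ gaussianCapacity q N := by
  unfold gaussianCapacity
  gcongr

lemma gaussianCapacity_anti_noise {c N N' : ℝ} (hc : 0 ≤ c) (hN : 0 < N) (hNN' : N ≤ N') :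
    gaussianCapacity c N' ≤ gaussianCapacity c N := by
  have hN' : 0 < N' := hN.trans_le hNN'
  unfold gaussianCapacity
  gcongr

lemma isRankFunction_gaussianCapacity {ι : Type*} [DecidableEq ι] {a : ι → ℝ} (ha : ∀ i, 0 ≤ a i)
    {N : ℝ} (hN : 0 < N) : IsRankFunction fun S => gaussianCapacity (∑ i ∈ S, a i) N where
  map_empty := by simp [gaussianCapacity]
  mono A B hAB := gaussianCapacity_mono hN (sum_nonneg fun i _ => ha i)
    (sum_le_sum_of_subset_of_nonneg hAB fun i _ _ => ha i)
  insert_sub_le_insert_sub A B j hAB hjB := by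
    have hA : 0 ≤ ∑ i ∈ A, a i := sum_nonneg fun i _ => ha i
    have hB : 0 ≤ ∑ i ∈ B, a i := sum_nonneg fun i _ => ha i
    rw [sum_insert hjB, sum_insert fun h => hjB (hAB h), add_comm (a j), add_comm (a j),
      gaussianCapacity_add_sub hN hB (ha j), gaussianCapacity_add_sub hN hA (ha j)]
    exact gaussianCapacity_anti_noise (ha j) (by positivity)
      (by linarith [sum_le_sum_of_subset_of_nonneg hAB fun i _ _ => ha i])

end Gaussian

end GreedyMAC

open GreedyMAC in
theorem greedy_optimal_for_linear_utility_general
    {Ω : Type*} [MeasureSpace Ω]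
    (M : ℕ) (N0 : ℝ) (hN0 : 0 < N0)
    (P : Fin M → ℝ) (hP : ∀ i, 0 < P i)
    (w : Fin M → ℝ) (hw : ∀ i, 0 ≤ w i)
    (H : Ω → Fin M → ℝ) (hH_nonneg : ∀ ω i, 0 ≤ H ω i)
    (h_int : ∀ S : Finset (Fin M), Integrable
      (fun ω => (1 / 2) * Real.log (1 + (∑ i ∈ S, H ω i * P i) / N0)) ℙ)
    (Cg : (Fin M → ℝ) → Set (Fin M → ℝ))
    (hCg : ∀ h : Fin M → ℝ, Cg h = {r : Fin M → ℝ | (∀ i, 0 ≤ r i) ∧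
      ∀ S : Finset (Fin M),
        ∑ i ∈ S, r i ≤ (1 / 2) * Real.log (1 + (∑ i ∈ S, h i * P i) / N0)})
    (Ca : Set (Fin M → ℝ))
    (hCa : Ca = {R : Fin M → ℝ | (∀ i, 0 ≤ R i) ∧
      ∀ S : Finset (Fin M),
        ∑ i ∈ S, R i ≤ ∫ ω, (1 / 2) * Real.log (1 + (∑ i ∈ S, H ω i * P i) / N0)}) :
    ∫ ω, sSup ((fun r : Fin M → ℝ => ∑ i, w i * r i) '' Cg (H ω)) =
      sSup ((fun R : Fin M → ℝ => ∑ i, w i * R i) '' Ca) := by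
  let σ : Equiv.Perm (Fin M) := Tuple.sort (OrderDual.toDual ∘ w)
  have hσ : Antitone (w ∘ σ) := Tuple.monotone_sort (OrderDual.toDual ∘ w)
  let rank : Ω → Finset (Fin M) → ℝ := fun ω S => gaussianCapacity (∑ i ∈ S, H ω i * P i) N0
  have hrank (ω : Ω) : IsRankFunction (rank ω) :=
    isRankFunction_gaussianCapacity (fun i => mul_nonneg (hH_nonneg ω i) (hP i).le) hN0
  have hgreedy (ω : Ω) :
      sSup ((fun r : Fin M → ℝ => ∑ i, w i * r i) '' Cg (H ω)) = greedyValue w σ (rank ω) := by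
    rw [hCg]
    exact (isGreatest_image_polymatroid hw hσ (hrank ω)).csSup_eq
  rw [integral_congr_ae (ae_of_all _ hgreedy), integral_greedyValue (f := rank) w σ h_int, hCa]
  exact ((isGreatest_image_polymatroid hw hσ (IsRankFunction.integral hrank h_int)).csSup_eq).symm

/-- For a fading Gaussian MAC with fixed powers `P i`, noise power `N0` and random fading
vector `H`, the greedy rate allocation policy is optimal for a linear utility
`u(R) = ∑ i, w i * R i`: the expectation over the fading of the maximum of the utility over
the instantaneous capacity region `Cg (H ω)` equals the maximum of the utility over the
throughput capacity region `Ca`. -/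
theorem greedy_optimal_for_linear_utility
    {Ω : Type*} [MeasureSpace Ω] [IsProbabilityMeasure (ℙ : Measure Ω)]
    (M : ℕ) (N0 : ℝ) (hN0 : 0 < N0)
    (P : Fin M → ℝ) (hP : ∀ i, 0 < P i)
    (w : Fin M → ℝ) (hw : ∀ i, 0 ≤ w i)
    (H : Ω → Fin M → ℝ) (hH_meas : Measurable H) (hH_nonneg : ∀ ω i, 0 ≤ H ω i)
    (h_int : ∀ S : Finset (Fin M), Integrable
      (fun ω => (1 / 2) * Real.log (1 + (∑ i ∈ S, H ω i * P i) / N0)) ℙ)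
    (Cg : (Fin M → ℝ) → Set (Fin M → ℝ))
    (hCg : ∀ h : Fin M → ℝ, Cg h = {r : Fin M → ℝ | (∀ i, 0 ≤ r i) ∧
      ∀ S : Finset (Fin M),
        ∑ i ∈ S, r i ≤ (1 / 2) * Real.log (1 + (∑ i ∈ S, h i * P i) / N0)})
    (Ca : Set (Fin M → ℝ))
    (hCa : Ca = {R : Fin M → ℝ | (∀ i, 0 ≤ R i) ∧
      ∀ S : Finset (Fin M),
        ∑ i ∈ S, R i ≤ ∫ ω, (1 / 2) * Real.log (1 + (∑ i ∈ S, H ω i * P i) / N0)}) :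
    ∫ ω, sSup ((fun r : Fin M → ℝ => ∑ i, w i * r i) '' Cg (H ω)) =
      sSup ((fun R : Fin M → ℝ => ∑ i, w i * R i) '' Ca) :=
  greedy_optimal_for_linear_utility_general M N0 hN0 P hP w hw H hH_nonneg h_int Cg hCg Ca hCa
end
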